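/- arXiv:1404.1594 — 2 statements merged into one kernel-verified Lean document; each statement's English description precedes it below -/
import Mathlib

section
/- Let μ and ν be finite measures supported in a compact subset of [0,∞) with ∫ t^n dμ = (∫ t^n dν)^2 for all n. Then the support of μ equals the closure of the set {s·t : s, t ∈ supp(ν)}. -/
/-! The moment identity says that `μ` and the image of `ν ⊗ ν` under multiplication have the
same moments. Both measures live on a compact set, where polynomials are uniformly dense in the
continuous functions (Weierstrass), so they are equal. The support of the image of a measure under
a continuous map is the closure of the image of its support, and the support of a product measure
is the product of the supports. -/

open MeasureTheory Set

/-- The (closed) support of a measure `μ` on `ℝ`: the set of points all of whose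
neighborhoods have positive measure. -/
def measureSupport (μ : MeasureTheory.Measure ℝ) : Set ℝ :=
  {x : ℝ | ∀ U ∈ nhds x, 0 < μ U}

open Polynomial Topology

lemma measureSupport_eq_support (μ : Measure ℝ) : measureSupport μ = μ.support :=
  Set.ext fun x ↦ (Measure.mem_support_iff_forall x).symm

namespace MeasureTheory.Measure

variable {X Y : Type*} [TopologicalSpace X] [MeasurableSpace X]
  [TopologicalSpace Y] [MeasurableSpace Y]

lemma support_map [HereditarilyLindelofSpace X] [OpensMeasurableSpace X] [BorelSpace Y]
    (μ : Measure X) {f : X → Y} (hf : Continuous f) :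
    (μ.map f).support = closure (f '' μ.support) := by
  refine (support_subset_of_isClosed isClosed_closure ?_).antisymm ?_
  · rw [mem_ae_map_iff hf.measurable.aemeasurable isClosed_closure.measurableSet]
    filter_upwards [support_mem_ae] with x hx
    exact subset_closure (mem_image_of_mem f hx)
  · refine isClosed_support.closure_subset_iff.2 ?_
    rintro _ ⟨x, hx, rfl⟩
    rw [mem_support_iff_forall] at hx ⊢
    exact fun U hU ↦ (hx _ (hf.continuousAt.preimage_mem_nhds hU)).trans_le
      (le_map_apply hf.measurable.aemeasurable U)

lemma support_prod (μ : Measure X) (ν : Measure Y) [SFinite ν] :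
    (μ.prod ν).support = μ.support ×ˢ ν.support := by
  ext ⟨x, y⟩
  simp only [mem_prod, ((𝓝 x).basis_sets.prod_nhds (𝓝 y).basis_sets).mem_measureSupport,
    (𝓝 x).basis_sets.mem_measureSupport, (𝓝 y).basis_sets.mem_measureSupport, prod_prod,
    ENNReal.mul_pos_iff]
  exact ⟨fun h ↦ ⟨fun U hU ↦ (h (U, univ) ⟨hU, Filter.univ_mem⟩).1,
      fun V hV ↦ (h (univ, V) ⟨Filter.univ_mem, hV⟩).2⟩,
    fun h i hi ↦ ⟨h.1 _ hi.1, h.2 _ hi.2⟩⟩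

end MeasureTheory.Measure

section Moments

variable {μ μ₁ μ₂ : Measure ℝ} {K : Set ℝ}

lemma integrable_of_ae_mem_isCompact [IsFiniteMeasure μ] (hK : IsCompact K)
    (hμ : ∀ᵐ t ∂μ, t ∈ K) {f : ℝ → ℝ} (hf : Continuous f) : Integrable f μ := by
  rw [← Measure.restrict_eq_self_of_ae_mem hμ]
  exact hf.continuousOn.integrableOn_compact hK

variable [IsFiniteMeasure μ₁] [IsFiniteMeasure μ₂]

lemma integral_eval_eq_of_forall_integral_pow_eq (hK : IsCompact K)
    (h₁ : ∀ᵐ t ∂μ₁, t ∈ K) (h₂ : ∀ᵐ t ∂μ₂, t ∈ K)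
    (h : ∀ n : ℕ, ∫ t, t ^ n ∂μ₁ = ∫ t, t ^ n ∂μ₂) (p : ℝ[X]) :
    ∫ t, p.eval t ∂μ₁ = ∫ t, p.eval t ∂μ₂ := by
  simp only [eval_eq_sum_range]
  rw [integral_finsetSum _ fun _ _ ↦ integrable_of_ae_mem_isCompact hK h₁ (by fun_prop),
    integral_finsetSum _ fun _ _ ↦ integrable_of_ae_mem_isCompact hK h₂ (by fun_prop)]
  simp only [integral_const_mul, h]

lemma integral_eq_of_forall_integral_pow_eq (hK : IsCompact K)
    (h₁ : ∀ᵐ t ∂μ₁, t ∈ K) (h₂ : ∀ᵐ t ∂μ₂, t ∈ K)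
    (h : ∀ n : ℕ, ∫ t, t ^ n ∂μ₁ = ∫ t, t ^ n ∂μ₂) {f : ℝ → ℝ} (hf : Continuous f) :
    ∫ t, f t ∂μ₁ = ∫ t, f t ∂μ₂ := by
  refine eq_of_forall_dist_le fun ε hε ↦ ?_
  set C := μ₁.real univ + μ₂.real univ + 1
  have hC : 0 < C := by positivity
  obtain ⟨p, hp⟩ := exists_polynomial_near_of_continuousOn _ _ f hf.continuousOn (ε / C)
    (div_pos hε hC)
  have approx : ∀ (μ : Measure ℝ) [IsFiniteMeasure μ], (∀ᵐ t ∂μ, t ∈ K) →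
      dist (∫ t, f t ∂μ) (∫ t, p.eval t ∂μ) ≤ ε / C * μ.real univ := by
    intro μ _ hμ
    rw [dist_eq_norm, ← integral_sub (integrable_of_ae_mem_isCompact hK hμ hf)
      (integrable_of_ae_mem_isCompact hK hμ p.continuous)]
    refine norm_integral_le_of_norm_le_const (hμ.mono fun t ht ↦ ?_)
    rw [Real.norm_eq_abs, abs_sub_comm]
    exact (hp t (hK.isBounded.subset_Icc_sInf_sSup ht)).le
  have hp_eq := integral_eval_eq_of_forall_integral_pow_eq hK h₁ h₂ h p
  calc dist (∫ t, f t ∂μ₁) (∫ t, f t ∂μ₂)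
      ≤ dist (∫ t, f t ∂μ₁) (∫ t, p.eval t ∂μ₁) + dist (∫ t, f t ∂μ₂) (∫ t, p.eval t ∂μ₂) :=
        hp_eq ▸ dist_triangle_right _ _ _
    _ ≤ ε / C * μ₁.real univ + ε / C * μ₂.real univ := add_le_add (approx μ₁ h₁) (approx μ₂ h₂)
    _ ≤ ε / C * C := by rw [← mul_add]; gcongr; linarith
    _ = ε := div_mul_cancel₀ ε hC.ne'

lemma ext_of_forall_integral_pow_eq (hK : IsCompact K)
    (h₁ : ∀ᵐ t ∂μ₁, t ∈ K) (h₂ : ∀ᵐ t ∂μ₂, t ∈ K)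
    (h : ∀ n : ℕ, ∫ t, t ^ n ∂μ₁ = ∫ t, t ^ n ∂μ₂) : μ₁ = μ₂ :=
  ext_of_forall_integral_eq_of_IsFiniteMeasure fun f ↦
    integral_eq_of_forall_integral_pow_eq hK h₁ h₂ h f.continuous

end Moments

lemma integral_pow_map_mul_prod (ν₁ ν₂ : Measure ℝ) [SFinite ν₁] [SFinite ν₂] (n : ℕ) :
    ∫ t, t ^ n ∂(ν₁.prod ν₂).map (fun p ↦ p.1 * p.2) = (∫ t, t ^ n ∂ν₁) * ∫ t, t ^ n ∂ν₂ := by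
  rw [integral_map (by fun_prop) (by fun_prop)]
  simp only [mul_pow]
  exact integral_prod_mul _ _

theorem support_of_square_measure_general
    (μ ν : Measure ℝ) [IsFiniteMeasure μ] [IsFiniteMeasure ν]
    (K : Set ℝ) (hK : IsCompact K)
    (hμK : μ Kᶜ = 0) (hνK : ν Kᶜ = 0)
    (h : ∀ n : ℕ, (∫ t, t ^ n ∂μ) = (∫ t, t ^ n ∂ν) ^ 2) :
    measureSupport μ =
      closure {z : ℝ | ∃ s ∈ measureSupport ν, ∃ t ∈ measureSupport ν, z = s * t} := by
  set m : ℝ × ℝ → ℝ := fun p ↦ p.1 * p.2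
  have hm : Continuous m := continuous_mul
  have hL : IsCompact (K ∪ m '' K ×ˢ K) := hK.union ((hK.prod hK).image hm)
  have hν_prod : ∀ᵐ p ∂ν.prod ν, p ∈ K ×ˢ K :=
    (Measure.quasiMeasurePreserving_fst.ae hνK).and (Measure.quasiMeasurePreserving_snd.ae hνK)
  have hμ_eq : μ = (ν.prod ν).map m := by
    refine ext_of_forall_integral_pow_eq hL
      (Filter.mem_of_superset (mem_ae_iff.2 hμK) subset_union_left) ?_ fun n ↦ ?_
    · refine (mem_ae_map_iff hm.aemeasurable hL.isClosed.measurableSet).2 ?_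
      exact hν_prod.mono fun p hp ↦ Or.inr (mem_image_of_mem m hp)
    · rw [h, integral_pow_map_mul_prod, sq]
  rw [hμ_eq, measureSupport_eq_support, Measure.support_map _ hm, Measure.support_prod,
    image_prod, measureSupport_eq_support]
  congr 1
  ext z
  simp only [mem_image2, mem_ofPred_eq, eq_comm]

/-- If `μ` and `ν` are finite, compactly supported measures on `[0,∞)` whose moments
satisfy `∫ t^n dμ = (∫ t^n dν)^2` for all `n`, then
`supp(μ)` is the closure of the product set `{s·t : s,t ∈ supp(ν)}`. -/
theorem support_of_square_measure
    (μ ν : Measure ℝ) [IsFiniteMeasure μ] [IsFiniteMeasure ν]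
    (K : Set ℝ) (hK : IsCompact K) (hKpos : K ⊆ Ici (0:ℝ))
    (hμK : μ Kᶜ = 0) (hνK : ν Kᶜ = 0)
    (h : ∀ n : ℕ, (∫ t, t ^ n ∂μ) = (∫ t, t ^ n ∂ν) ^ 2) :
    measureSupport μ =
      closure {z : ℝ | ∃ s ∈ measureSupport ν, ∃ t ∈ measureSupport ν, z = s * t} :=
  support_of_square_measure_general μ ν K hK hμK hνK h
end

section
/- For every natural number n, ∫_0^1 t^n · (√2/√π) t (-ln t)^{-1/2} dt squared equals ∫_0^1 t^n · 2t dt; that is, (∫_0^1 (√2/√π) t^{n+1} (-ln t)^{-1/2} dt)^2 = 2/(n+2) for all n ≥ 0. -/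
/-! The substitution `t = exp (-u)` turns `∫₀¹ t^a (-log t)^(s-1) dt` into the Gamma integral
`∫₀^∞ u^(s-1) e^{-(a+1)u} du = Γ(s) / (a+1)^s`; with `a = n + 1`, `s = 1/2` and `Γ(1/2) = √π`
the square of the moment is `2 / (n + 2)`. -/

open MeasureTheory Set Real

theorem integral_Ioo_zero_one_eq_integral_Ioi_comp_exp_neg {E : Type*} [NormedAddCommGroup E]
    [NormedSpace ℝ E] (g : ℝ → E) :
    ∫ t in Ioo (0:ℝ) 1, g t = ∫ u in Ioi (0:ℝ), exp (-u) • g (exp (-u)) := by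
  have himage : (fun u ↦ exp (-u)) '' Ioi 0 = Ioo 0 1 := by
    ext t
    constructor
    · rintro ⟨u, hu, rfl⟩
      exact ⟨exp_pos _, exp_lt_one_iff.mpr (neg_neg_of_pos hu)⟩
    · rintro ⟨ht0, ht1⟩
      exact ⟨-log t, neg_pos.mpr (log_neg ht0 ht1), by simp [exp_log ht0]⟩
  rw [← himage, integral_image_eq_integral_abs_deriv_smul measurableSet_Ioi
    (fun u _ ↦ (hasDerivAt_neg u).exp.hasDerivWithinAt)
    (fun u _ v _ huv ↦ neg_injective (exp_injective huv))]
  simp [abs_of_pos (exp_pos _)]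

theorem integral_Ioo_rpow_mul_neg_log_rpow {a s : ℝ} (ha : -1 < a) (hs : 0 < s) :
    ∫ t in Ioo (0:ℝ) 1, t ^ a * (-log t) ^ (s - 1) = Gamma s / (a + 1) ^ s := by
  have ha' : 0 < a + 1 := by linarith
  rw [div_eq_inv_mul, ← inv_rpow ha'.le, ← one_div, ← integral_rpow_mul_exp_neg_mul_Ioi hs ha',
    integral_Ioo_zero_one_eq_integral_Ioi_comp_exp_neg]
  refine setIntegral_congr_fun measurableSet_Ioi fun u _ ↦ ?_
  rw [smul_eq_mul, log_exp, neg_neg, ← exp_mul, ← mul_assoc, ← exp_add]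
  ring_nf

theorem integral_Ioo_zero_one_pow (k : ℕ) :
    ∫ t in Ioo (0:ℝ) 1, t ^ k = 1 / ((k : ℝ) + 1) := by
  rw [← integral_Ioc_eq_integral_Ioo, ← intervalIntegral.integral_of_le zero_le_one, integral_pow]
  simp

/-- The square root of the measure `2t dt` on `(0,1)` is `(√2/√π) t (-ln t)^{-1/2} dt`:
the square of its `n`-th moment equals `∫_0^1 t^n · 2t dt = 2/(n+2)`. -/
theorem sqrt_of_two_t_dt (n : ℕ) :
    (∫ t in Ioo (0:ℝ) 1,
        (Real.sqrt 2 / Real.sqrt π) * t ^ (n + 1) * (-Real.log t) ^ (-(1/2) : ℝ)) ^ 2 =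
      (∫ t in Ioo (0:ℝ) 1, t ^ n * (2 * t)) ∧
    (∫ t in Ioo (0:ℝ) 1, t ^ n * (2 * t)) = 2 / ((n : ℝ) + 2) := by
  have hmoment : (∫ t in Ioo (0:ℝ) 1, t ^ n * (2 * t)) = 2 / ((n : ℝ) + 2) := by
    simp_rw [show ∀ t : ℝ, t ^ n * (2 * t) = 2 * t ^ (n + 1) by intro t; ring]
    rw [integral_const_mul, integral_Ioo_zero_one_pow]
    push_cast; ring
  have hroot : (∫ t in Ioo (0:ℝ) 1, t ^ (n + 1) * (-Real.log t) ^ (-(1/2) : ℝ))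
      = √π / √((n : ℝ) + 2) := by
    have h := integral_Ioo_rpow_mul_neg_log_rpow (a := (n + 1 : ℕ)) (s := 1 / 2)
      (neg_one_lt_zero.trans_le (Nat.cast_nonneg _)) one_half_pos
    rw [Gamma_one_half_eq, ← sqrt_eq_rpow, show (1 / 2 - 1 : ℝ) = -(1 / 2) by norm_num] at h
    simp only [rpow_natCast] at h
    rw [h]
    push_cast; ring_nf
  refine ⟨?_, hmoment⟩
  simp_rw [mul_assoc, integral_const_mul, hroot, hmoment]
  have hn2 : (0:ℝ) < n + 2 := by positivity
  rw [mul_pow, div_pow, div_pow, sq_sqrt zero_le_two, sq_sqrt pi_pos.le, sq_sqrt hn2.le]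
  field_simp
end
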